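/- Let $m, n$ be positive integers with $m \geq n$. Then $\sum_{k=0}^{n} \binom{m+k}{k}\binom{m}{k}\binom{n+k}{k}\binom{n}{k} \left[ 1 + k\left(H_{m+k}^{(1)} + H_{m-k}^{(1)} + H_{n+k}^{(1)} + H_{n-k}^{(1)} - 4H_k^{(1)}\right) \right] + \sum_{k=n+1}^{m} (-1)^{k-n} \binom{m+k}{k}\binom{m}{k}\binom{n+k}{k} / \binom{k-1}{n} = (-1)^{m+n}$. -/

import Mathlib

open Finset

/-- Generalized harmonicSum sum `H n^{(i)} = ∑_{j=1}^n 1/j^i`. -/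
def harmonicSum (i n : ℕ) : ℚ := ∑ j ∈ Finset.range n, (1 : ℚ) / ((j : ℚ) + 1) ^ i

/-!
Consider the rational function
`f(x) = (x+1)⋯(x+m) · (x+1)⋯(x+n) / (x · (x-1)⋯(x-m) · (x-1)⋯(x-n))`.
Numerator and denominator are monic of degrees `m + n` and `m + n + 1`, so the residues of `f`
add up to `1`. The residue at `0` is `(-1)^(m+n)`; at a simple pole `k ∈ (n, m]` it is
`(-1)^(m+n)` times the `k`-th term of the second sum, and at a double pole `k ∈ [1, n]` it is
`(-1)^(m+n)` times the `k`-th term of the first sum, the harmonic numbers coming from the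
logarithmic derivatives of the two products at `k`.

The residue theorem is proved algebraically: subtracting from the numerator the principal parts
of `f`, each multiplied by the denominator, leaves a polynomial of smaller degree than the
denominator and divisible by it, hence zero; comparing coefficients of `x^(m+n)` gives the claim.
-/

open Polynomial

namespace Polynomial

variable {F : Type*} [Field F]

/-- The residue of `p / ((X - C x) * q)` at `x`, when `q.eval x ≠ 0`. -/
noncomputable def simplePoleResidue (p q : F[X]) (x : F) : F := p.eval x / q.eval x

/-- The residue of `p / ((X - C x) ^ 2 * q)` at `x`, i.e. `(p / q)' x`, when `q.eval x ≠ 0`. -/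
noncomputable def doublePoleResidue (p q : F[X]) (x : F) : F :=
  (derivative p * q - p * derivative q).eval x / q.eval x ^ 2

theorem X_sub_C_sq_dvd_of_isRoot {p : F[X]} {x : F} (h : p.IsRoot x)
    (h' : (derivative p).IsRoot x) :
    (X - C x) ^ 2 ∣ p := by
  rcases eq_or_ne p 0 with rfl | hp
  · simp
  exact (le_rootMultiplicity_iff hp).1 ((one_lt_rootMultiplicity_iff_isRoot hp).2 ⟨h, h'⟩)

theorem X_sub_C_dvd_sub_simplePoleResidue_smul {p q : F[X]} {x : F} (hq : q.eval x ≠ 0) :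
    X - C x ∣ p - simplePoleResidue p q x • q := by
  rw [dvd_iff_isRoot, IsRoot, eval_sub, eval_smul, smul_eq_mul, simplePoleResidue,
    div_mul_cancel₀ _ hq, sub_self]

theorem X_sub_C_sq_dvd_sub_doublePoleResidue_smul {p q : F[X]} {x : F} (hq : q.eval x ≠ 0) :
    (X - C x) ^ 2 ∣
      p - simplePoleResidue p q x • q - doublePoleResidue p q x • ((X - C x) * q) := by
  apply X_sub_C_sq_dvd_of_isRoot
  · simp [simplePoleResidue, hq]
  · simp only [IsRoot, derivative_sub, derivative_smul, derivative_mul, derivative_X,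
      derivative_C, eval_sub, eval_smul, eval_add, eval_mul, eval_one, eval_zero, eval_X, eval_C,
      smul_eq_mul, simplePoleResidue, doublePoleResidue]
    field_simp
    ring

theorem eval_derivative_mul_of_eq_mul {f g : F[X]} {x a b : F}
    (hf : (derivative f).eval x = f.eval x * a) (hg : (derivative g).eval x = g.eval x * b) :
    (derivative (f * g)).eval x = (f * g).eval x * (a + b) := by
  rw [derivative_mul, eval_add, eval_mul, eval_mul, hf, hg, eval_mul]
  ring

theorem doublePoleResidue_eq_of_eq_mul {p q : F[X]} {x a b : F}
    (hp : (derivative p).eval x = p.eval x * a) (hq : (derivative q).eval x = q.eval x * b)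
    (hq0 : q.eval x ≠ 0) :
    doublePoleResidue p q x = simplePoleResidue p q x * (a - b) := by
  rw [doublePoleResidue, simplePoleResidue, eval_sub, eval_mul, eval_mul, hp, hq]
  field_simp

end Polynomial

namespace Lagrange

variable {F ι : Type*} [Field F] [DecidableEq ι]

theorem eval_nodal_erase {s : Finset ι} {v : ι → F} {i : ι} {x : F} (hi : i ∈ s)
    (hx : x ≠ v i) :
    (nodal (s.erase i) v).eval x = (nodal s v).eval x / (x - v i) := by
  rw [nodal_eq_mul_nodal_erase hi, eval_mul, eval_sub, eval_X, eval_C,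
    mul_div_cancel_left₀ _ (sub_ne_zero.2 hx)]

theorem eval_derivative_nodal {s : Finset ι} {v : ι → F} {x : F} (hx : ∀ i ∈ s, x ≠ v i) :
    (derivative (nodal s v)).eval x = (nodal s v).eval x * ∑ i ∈ s, (x - v i)⁻¹ := by
  rw [derivative_nodal, eval_finsetSum, mul_sum]
  exact sum_congr rfl fun i hi => by rw [eval_nodal_erase hi (hx i hi), div_eq_mul_inv]

variable {s t : Finset ι} {r : ι → F} {i j : ι}

/-- For `i ∈ s` and `t ⊆ s`, `nodal s r * nodal t r = (X - C (r i)) ^ k * cofactor s t r i`,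
where `k` is `2` if `i ∈ t` and `1` otherwise. -/
noncomputable def cofactor (s t : Finset ι) (r : ι → F) (i : ι) : F[X] :=
  nodal (s.erase i) r * nodal (t.erase i) r

theorem monic_cofactor : (cofactor s t r i).Monic := nodal_monic.mul nodal_monic

/-- The residue of `p / (nodal s r * nodal t r)` at `r i`; the poles at the nodes in `t` are
double. -/
noncomputable def residue (p : F[X]) (s t : Finset ι) (r : ι → F) (i : ι) : F :=
  if i ∈ t then doublePoleResidue p (cofactor s t r i) (r i)
  else simplePoleResidue p (cofactor s t r i) (r i)

/-- The principal part of `p / (nodal s r * nodal t r)` at `r i`, multiplied by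
`nodal s r * nodal t r`. -/
noncomputable def principalNumerator (p : F[X]) (s t : Finset ι) (r : ι → F) (i : ι) : F[X] :=
  if i ∈ t then
    simplePoleResidue p (cofactor s t r i) (r i) • cofactor s t r i
      + doublePoleResidue p (cofactor s t r i) (r i) • ((X - C (r i)) * cofactor s t r i)
  else simplePoleResidue p (cofactor s t r i) (r i) • cofactor s t r i

theorem nodal_mul_nodal_eq_prod (hts : t ⊆ s) :
    nodal s r * nodal t r = ∏ i ∈ s, (X - C (r i)) ^ (if i ∈ t then 2 else 1) := by
  have ht : nodal t r = ∏ i ∈ s, if i ∈ t then X - C (r i) else 1 := by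
    rw [prod_ite_mem, inter_eq_right.2 hts, nodal]
  rw [ht, nodal, ← prod_mul_distrib]
  refine prod_congr rfl fun i _ => ?_
  split_ifs <;> ring

theorem eval_cofactor_ne_zero (hts : t ⊆ s) (hr : Set.InjOn r s) (hi : i ∈ s) :
    (cofactor s t r i).eval (r i) ≠ 0 := by
  have hne : ∀ u ⊆ s, ∀ j ∈ u.erase i, r i ≠ r j := fun u hu j hj =>
    hr.ne hi (hu (mem_of_mem_erase hj)) (ne_of_mem_erase hj).symm
  rw [cofactor, eval_mul]
  exact mul_ne_zero (eval_nodal_not_at_node (hne s subset_rfl))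
    (eval_nodal_not_at_node (hne t hts))

theorem natDegree_cofactor_add (hi : i ∈ s) :
    (cofactor s t r i).natDegree + (if i ∈ t then 2 else 1) = #s + #t := by
  rw [cofactor, natDegree_mul nodal_ne_zero nodal_ne_zero, natDegree_nodal, natDegree_nodal,
    card_erase_of_mem hi]
  have := card_pos.2 ⟨i, hi⟩
  split_ifs with hit
  · have := card_pos.2 ⟨i, hit⟩
    rw [card_erase_of_mem hit]
    omega
  · rw [erase_eq_of_notMem hit]
    omega

theorem X_sub_C_pow_dvd_cofactor (hi : i ∈ s) (hji : j ≠ i) :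
    (X - C (r i)) ^ (if i ∈ t then 2 else 1) ∣ cofactor s t r j := by
  have hs : X - C (r i) ∣ nodal (s.erase j) r :=
    X_sub_C_dvd_nodal r (mem_erase.2 ⟨hji.symm, hi⟩)
  split_ifs with hit
  · rw [pow_two]
    exact mul_dvd_mul hs (X_sub_C_dvd_nodal r (mem_erase.2 ⟨hji.symm, hit⟩))
  · rw [pow_one]
    exact dvd_mul_of_dvd_left hs _

theorem cofactor_dvd_principalNumerator (p : F[X]) :
    cofactor s t r i ∣ principalNumerator p s t r i := by
  unfold principalNumerator
  split_ifs
  · exact dvd_add (dvd_smul_of_dvd _ dvd_rfl) (dvd_smul_of_dvd _ (dvd_mul_left _ _))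
  · exact dvd_smul_of_dvd _ dvd_rfl

theorem X_sub_C_pow_dvd_sub_principalNumerator (hts : t ⊆ s) (hr : Set.InjOn r s) (hi : i ∈ s)
    (p : F[X]) :
    (X - C (r i)) ^ (if i ∈ t then 2 else 1) ∣ p - principalNumerator p s t r i := by
  have hq := eval_cofactor_ne_zero (t := t) hts hr hi
  unfold principalNumerator
  split_ifs
  · rw [← sub_sub]
    exact X_sub_C_sq_dvd_sub_doublePoleResidue_smul hq
  · rw [pow_one]
    exact X_sub_C_dvd_sub_simplePoleResidue_smul hq

theorem natDegree_X_sub_C_mul_cofactor :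
    ((X - C (r i)) * cofactor s t r i).natDegree = (cofactor s t r i).natDegree + 1 := by
  rw [natDegree_mul (X_sub_C_ne_zero _) monic_cofactor.ne_zero, natDegree_X_sub_C, add_comm]

theorem degree_principalNumerator_lt (hi : i ∈ s) (p : F[X]) :
    (principalNumerator p s t r i).degree < #s + #t := by
  have hdeg := natDegree_cofactor_add (t := t) (r := r) hi
  have hlt : ∀ q : F[X], q.natDegree < #s + #t → q.degree < #s + #t := fun q hq =>
    degree_le_natDegree.trans_lt (by exact_mod_cast hq)
  unfold principalNumerator
  split_ifs with hit
  · rw [if_pos hit] at hdeg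
    refine (degree_add_le _ _).trans_lt (max_lt ?_ ?_) <;>
      refine (degree_smul_le _ _).trans_lt (hlt _ ?_)
    · omega
    · rw [natDegree_X_sub_C_mul_cofactor]
      omega
  · rw [if_neg hit] at hdeg
    exact (degree_smul_le _ _).trans_lt (hlt _ (by omega))

theorem coeff_principalNumerator (hi : i ∈ s) (p : F[X]) :
    (principalNumerator p s t r i).coeff (#s + #t - 1) = residue p s t r i := by
  have hdeg := natDegree_cofactor_add (t := t) (r := r) hi
  unfold principalNumerator residue
  split_ifs with hit
  · rw [if_pos hit] at hdeg
    have hX := (monic_X_sub_C (r i)).mul (monic_cofactor (s := s) (t := t) (r := r) (i := i))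
    rw [coeff_add, coeff_smul, coeff_smul, coeff_eq_zero_of_natDegree_lt (by omega),
      show #s + #t - 1 = ((X - C (r i)) * cofactor s t r i).natDegree by
        rw [natDegree_X_sub_C_mul_cofactor]; omega,
      hX.coeff_natDegree, smul_eq_mul, smul_eq_mul, mul_zero, mul_one, zero_add]
  · rw [if_neg hit] at hdeg
    rw [coeff_smul, show #s + #t - 1 = (cofactor s t r i).natDegree by omega,
      monic_cofactor.coeff_natDegree, smul_eq_mul, mul_one]

theorem nodal_mul_nodal_dvd_sub_sum_principalNumerator (hts : t ⊆ s) (hr : Set.InjOn r s)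
    (p : F[X]) : nodal s r * nodal t r ∣ p - ∑ i ∈ s, principalNumerator p s t r i := by
  rw [nodal_mul_nodal_eq_prod hts]
  refine prod_dvd_of_coprime (fun i hi j hj hij => ?_) fun i hi => ?_
  · exact (isCoprime_X_sub_C_of_isUnit_sub (sub_ne_zero.2 (hr.ne hi hj hij)).isUnit).pow
  · rw [← add_sum_erase s _ hi, ← sub_sub]
    refine dvd_sub (X_sub_C_pow_dvd_sub_principalNumerator hts hr hi p) (dvd_sum fun j hj => ?_)
    exact (X_sub_C_pow_dvd_cofactor hi (ne_of_mem_erase hj)).trans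
      (cofactor_dvd_principalNumerator p)

theorem coeff_eq_sum_residue (hts : t ⊆ s) (hr : Set.InjOn r s) {p : F[X]}
    (hp : p.degree < #s + #t) : p.coeff (#s + #t - 1) = ∑ i ∈ s, residue p s t r i := by
  have hdeg : (p - ∑ i ∈ s, principalNumerator p s t r i).degree < #s + #t :=
    (degree_sub_le _ _).trans_lt <| max_lt hp <| (degree_sum_le _ _).trans_lt <|
      (Finset.sup_lt_iff (WithBot.bot_lt_coe _)).2 fun i hi => degree_principalNumerator_lt hi p
  have hzero := eq_zero_of_dvd_of_degree_lt
    (nodal_mul_nodal_dvd_sub_sum_principalNumerator hts hr p)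
    (by rwa [degree_mul, degree_nodal, degree_nodal])
  rw [congrArg (coeff · (#s + #t - 1)) (sub_eq_zero.1 hzero), finsetSum_coeff]
  exact sum_congr rfl fun i hi => coeff_principalNumerator hi p

end Lagrange

open Lagrange Nat

theorem harmonicSum_one : harmonicSum 1 = harmonic := by
  funext n
  simp [harmonicSum, harmonic]

theorem prod_range_cast_add_succ (x M : ℕ) :
    ∏ j ∈ range M, ((x : ℚ) + (j + 1)) = (x + M)! / x ! := by
  induction M with
  | zero => simp [factorial_ne_zero]
  | succ M ih =>
    rw [prod_range_succ, ih, ← add_assoc x M 1, factorial_succ]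
    push_cast
    ring

theorem sum_range_inv_cast_add_succ (x M : ℕ) :
    ∑ j ∈ range M, ((x : ℚ) + (j + 1))⁻¹ = harmonic (x + M) - harmonic x := by
  induction M with
  | zero => simp
  | succ M ih =>
    rw [sum_range_succ, ih, ← add_assoc x M 1, harmonic_succ]
    push_cast
    ring

theorem prod_range_cast_sub {K i : ℕ} (hK : K ≤ i) :
    ∏ j ∈ range K, ((i : ℚ) - j) = i ! / (i - K)! := by
  induction K with
  | zero => simp [factorial_ne_zero]
  | succ K ih =>
    have hiK : ((i - (K + 1) + 1 : ℕ) : ℚ) = i - K := by push_cast [hK]; ring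
    have hiK0 : (i : ℚ) - K ≠ 0 := hiK ▸ Nat.cast_ne_zero.2 (Nat.succ_ne_zero _)
    rw [prod_range_succ, ih (by omega), show i - K = i - (K + 1) + 1 by omega, factorial_succ,
      Nat.cast_mul, hiK]
    field_simp

theorem sum_range_inv_cast_sub {K i : ℕ} (hK : K ≤ i) :
    ∑ j ∈ range K, ((i : ℚ) - j)⁻¹ = harmonic i - harmonic (i - K) := by
  induction K with
  | zero => simp
  | succ K ih =>
    rw [sum_range_succ, ih (by omega), show i - K = i - (K + 1) + 1 by omega, harmonic_succ]
    push_cast [hK]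
    ring

theorem prod_range_erase_cast_sub {i M : ℕ} (hi : i ≤ M) :
    ∏ j ∈ (range (M + 1)).erase i, ((i : ℚ) - j) = (-1) ^ (M - i) * i ! * (M - i)! := by
  induction M, hi using Nat.le_induction with
  | base =>
    rw [range_add_one, erase_insert notMem_range_self, prod_range_cast_sub le_rfl]
    simp
  | succ M hiM ih =>
    rw [range_add_one (n := M + 1), erase_insert_of_ne (by omega), prod_insert (by simp), ih,
      show M + 1 - i = M - i + 1 by omega, factorial_succ]
    push_cast [hiM]
    ring

theorem sum_range_erase_inv_cast_sub {i M : ℕ} (hi : i ≤ M) :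
    ∑ j ∈ (range (M + 1)).erase i, ((i : ℚ) - j)⁻¹ = harmonic i - harmonic (M - i) := by
  induction M, hi using Nat.le_induction with
  | base =>
    rw [range_add_one, erase_insert notMem_range_self, sum_range_inv_cast_sub le_rfl]
  | succ M hiM ih =>
    rw [range_add_one (n := M + 1), erase_insert_of_ne (by omega), sum_insert (by simp), ih,
      show M + 1 - i = M - i + 1 by omega, harmonic_succ]
    push_cast [hiM]
    rw [show (i : ℚ) - (M + 1) = -(M - i + 1) by ring, inv_neg]
    ring

noncomputable def nodalNeg (M : ℕ) : ℚ[X] := nodal (range M) fun j => -((j : ℚ) + 1)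

theorem eval_nodalNeg (x M : ℕ) : (nodalNeg M).eval (x : ℚ) = (M + x)! / x ! := by
  simp_rw [nodalNeg, eval_nodal, sub_neg_eq_add]
  rw [prod_range_cast_add_succ, add_comm]

theorem eval_derivative_nodalNeg (x M : ℕ) :
    (derivative (nodalNeg M)).eval (x : ℚ) =
      (nodalNeg M).eval (x : ℚ) * (harmonic (M + x) - harmonic x) := by
  rw [nodalNeg, eval_derivative_nodal fun j _ => by rw [ne_eq, eq_neg_iff_add_eq_zero]; positivity]
  simp_rw [sub_neg_eq_add]
  rw [sum_range_inv_cast_add_succ, add_comm]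

theorem eval_nodal_range_erase {i M : ℕ} (hi : i ≤ M) :
    (nodal ((range (M + 1)).erase i) ((↑) : ℕ → ℚ)).eval (i : ℚ) =
      (-1) ^ (M - i) * i ! * (M - i)! := by
  rw [eval_nodal]
  exact prod_range_erase_cast_sub hi

theorem eval_derivative_nodal_range_erase {i M : ℕ} (hi : i ≤ M) :
    (derivative (nodal ((range (M + 1)).erase i) ((↑) : ℕ → ℚ))).eval (i : ℚ) =
      (nodal ((range (M + 1)).erase i) ((↑) : ℕ → ℚ)).eval (i : ℚ) *
        (harmonic i - harmonic (M - i)) := by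
  rw [eval_derivative_nodal fun j hj => Nat.cast_injective.ne (ne_of_mem_erase hj).symm,
    sum_range_erase_inv_cast_sub hi]

variable {m n i : ℕ}

theorem residue_zero :
    residue (nodalNeg m * nodalNeg n) (range (m + 1)) ((range (n + 1)).erase 0) (↑) 0 =
      (-1) ^ (m + n) := by
  rw [residue, if_neg (notMem_erase 0 _), simplePoleResidue, cofactor, erase_idem, eval_mul,
    eval_mul, eval_nodalNeg, eval_nodalNeg, eval_nodal_range_erase (zero_le m),
    eval_nodal_range_erase (zero_le n)]
  have hsign : (-1 : ℚ) ^ m * (-1) ^ n * (-1) ^ (m + n) = 1 := by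
    rw [← pow_add, ← pow_add]
    exact Even.neg_one_pow ⟨m + n, rfl⟩
  field_simp
  simp only [add_zero, Nat.sub_zero, factorial_zero, Nat.cast_one, one_pow, one_mul]
  linear_combination (-((m ! : ℚ) * n !)) * hsign

theorem eval_cofactor_of_le (hi : 1 ≤ i) (hin : i ≤ n) (hnm : n ≤ m) :
    (cofactor (range (m + 1)) ((range (n + 1)).erase 0) (↑) i).eval (i : ℚ) =
      (-1) ^ (m - i) * i ! * (m - i)! * ((-1) ^ (n - i) * i ! * (n - i)! / i) := by
  have hi0 : (i : ℚ) ≠ 0 := by positivity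
  rw [cofactor, eval_mul, erase_right_comm, eval_nodal_range_erase (hin.trans hnm),
    eval_nodal_erase (mem_erase.2 ⟨by omega, mem_range.2 (by omega)⟩) (by simpa using hi0),
    eval_nodal_range_erase hin, Nat.cast_zero, sub_zero]

theorem eval_derivative_cofactor_of_le (hi : 1 ≤ i) (hin : i ≤ n) (hnm : n ≤ m) :
    (derivative (cofactor (range (m + 1)) ((range (n + 1)).erase 0) (↑) i)).eval (i : ℚ) =
      (cofactor (range (m + 1)) ((range (n + 1)).erase 0) (↑) i).eval (i : ℚ) *
        ((harmonic i - harmonic (m - i)) + (harmonic i - harmonic (n - i) - (i : ℚ)⁻¹)) := by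
  refine eval_derivative_mul_of_eq_mul (eval_derivative_nodal_range_erase (hin.trans hnm)) ?_
  rw [eval_derivative_nodal fun j hj => Nat.cast_injective.ne (ne_of_mem_erase hj).symm,
    erase_right_comm, sum_erase_eq_sub (mem_erase.2 ⟨by omega, mem_range.2 (by omega)⟩),
    sum_range_erase_inv_cast_sub hin, Nat.cast_zero, sub_zero]

theorem eval_cofactor_of_lt (hni : n < i) (him : i ≤ m) :
    (cofactor (range (m + 1)) ((range (n + 1)).erase 0) (↑) i).eval (i : ℚ) =
      (-1) ^ (m - i) * i ! * (m - i)! * (i ! / (i - (n + 1))! / i) := by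
  have hi0 : (i : ℚ) ≠ 0 := Nat.cast_ne_zero.2 (by omega)
  rw [cofactor, eval_mul, erase_eq_of_notMem (s := (range (n + 1)).erase 0) (by simp; omega),
    eval_nodal_range_erase him, eval_nodal_erase (mem_range.2 (by omega)) (by simpa using hi0),
    eval_nodal, prod_range_cast_sub hni, Nat.cast_zero, sub_zero]

theorem residue_of_le (hi : 1 ≤ i) (hin : i ≤ n) (hnm : n ≤ m) :
    residue (nodalNeg m * nodalNeg n) (range (m + 1)) ((range (n + 1)).erase 0) (↑) i =
      (-1) ^ (m + n) * (((m + i).choose i : ℚ) * m.choose i * (n + i).choose i * n.choose i *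
        (1 + i * (harmonic (m + i) + harmonic (m - i) + harmonic (n + i) + harmonic (n - i)
          - 4 * harmonic i))) := by
  have hit : i ∈ (range (n + 1)).erase 0 := mem_erase.2 ⟨by omega, mem_range.2 (by omega)⟩
  have hts : (range (n + 1)).erase 0 ⊆ range (m + 1) :=
    (erase_subset _ _).trans (range_subset_range.2 (by omega))
  have hQ := eval_cofactor_ne_zero hts (Nat.cast_injective (R := ℚ)).injOn (hts hit)
  have hsign : (-1 : ℚ) ^ (m - i) * (-1) ^ (n - i) * (-1) ^ (m + n) = 1 := by
    rw [← pow_add, ← pow_add]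
    exact Even.neg_one_pow ⟨m + n - i, by omega⟩
  have hi0 : (i : ℚ) ≠ 0 := by positivity
  rw [residue, if_pos hit, doublePoleResidue_eq_of_eq_mul (eval_derivative_mul_of_eq_mul
      (eval_derivative_nodalNeg i m) (eval_derivative_nodalNeg i n))
      (eval_derivative_cofactor_of_le hi hin hnm) hQ, simplePoleResidue, eval_mul, eval_nodalNeg,
    eval_nodalNeg, eval_cofactor_of_le hi hin hnm, cast_choose ℚ (le_add_left i m),
    cast_choose ℚ (le_add_left i n), cast_choose ℚ (hin.trans hnm), cast_choose ℚ hin,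
    Nat.add_sub_cancel, Nat.add_sub_cancel]
  field_simp
  rw [hsign]
  ring

theorem residue_of_lt (hni : n < i) (him : i ≤ m) :
    residue (nodalNeg m * nodalNeg n) (range (m + 1)) ((range (n + 1)).erase 0) (↑) i =
      (-1) ^ (m + n) * ((-1) ^ (i - n) * ((m + i).choose i : ℚ) * m.choose i * (n + i).choose i
        / (i - 1).choose n) := by
  have hit : i ∉ (range (n + 1)).erase 0 := by simp; omega
  have hsign : (-1 : ℚ) ^ (m - i) * (-1) ^ (m + n) * (-1) ^ (i - n) = 1 := by
    rw [← pow_add, ← pow_add]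
    exact Even.neg_one_pow ⟨m, by omega⟩
  have hi0 : (i : ℚ) ≠ 0 := Nat.cast_ne_zero.2 (by omega)
  rw [residue, if_neg hit, simplePoleResidue, eval_mul, eval_nodalNeg, eval_nodalNeg,
    eval_cofactor_of_lt hni him, cast_choose ℚ (le_add_left i m),
    cast_choose ℚ (le_add_left i n), cast_choose ℚ him,
    cast_choose ℚ (show n ≤ i - 1 by omega), Nat.add_sub_cancel, Nat.add_sub_cancel,
    show i - (n + 1) = i - 1 - n by omega]
  field_simp
  have hfac : (i : ℚ) * (i - 1)! = i ! := by exact_mod_cast mul_factorial_pred (by omega)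
  linear_combination hfac - (i ! : ℚ) * hsign

theorem neg_one_pow_mul_residue (hnm : n ≤ m) (him : i ≤ m) :
    (-1) ^ (m + n) *
        residue (nodalNeg m * nodalNeg n) (range (m + 1)) ((range (n + 1)).erase 0) (↑) i =
      if i ≤ n then
        ((m + i).choose i : ℚ) * m.choose i * (n + i).choose i * n.choose i *
          (1 + i * (harmonic (m + i) + harmonic (m - i) + harmonic (n + i) + harmonic (n - i)
            - 4 * harmonic i))
      else (-1) ^ (i - n) * ((m + i).choose i : ℚ) * m.choose i * (n + i).choose i
        / (i - 1).choose n := by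
  have hsq : ((-1 : ℚ) ^ (m + n)) * (-1) ^ (m + n) = 1 := by
    rw [← pow_add]
    exact Even.neg_one_pow ⟨m + n, rfl⟩
  split_ifs with hin
  · rcases Nat.eq_zero_or_pos i with rfl | hi
    · simp [residue_zero, hsq]
    · rw [residue_of_le hi hin hnm, ← mul_assoc, hsq, one_mul]
  · rw [residue_of_lt (not_le.1 hin) him, ← mul_assoc, hsq, one_mul]

theorem sum_residue_eq_one (hnm : n ≤ m) :
    ∑ i ∈ range (m + 1),
      residue (nodalNeg m * nodalNeg n) (range (m + 1)) ((range (n + 1)).erase 0) (↑) i = 1 := by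
  have hts : (range (n + 1)).erase 0 ⊆ range (m + 1) :=
    (erase_subset _ _).trans (range_subset_range.2 (by omega))
  have hcard : #(range (m + 1)) + #((range (n + 1)).erase 0) = m + n + 1 := by
    rw [card_range, card_erase_of_mem (by simp), card_range]
    omega
  have hmonic : (nodalNeg m * nodalNeg n).Monic := nodal_monic.mul nodal_monic
  have hdeg : (nodalNeg m * nodalNeg n).natDegree = m + n := by
    rw [nodalNeg, nodalNeg, natDegree_mul nodal_ne_zero nodal_ne_zero, natDegree_nodal,
      natDegree_nodal, card_range, card_range]
  have hlt : (nodalNeg m * nodalNeg n).degree < #(range (m + 1)) + #((range (n + 1)).erase 0) := by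
    rw [← Nat.cast_add, hcard, degree_eq_natDegree hmonic.ne_zero, hdeg]
    exact_mod_cast lt_add_one _
  rw [← coeff_eq_sum_residue hts (Nat.cast_injective (R := ℚ)).injOn hlt, hcard,
    Nat.add_sub_cancel, ← hdeg, hmonic.coeff_natDegree]

theorem stmt_1_general (m n : ℕ) (hmn : n ≤ m) :
    (∑ k ∈ Finset.range (n + 1),
      ((m + k).choose k : ℚ) * (m.choose k : ℚ) * ((n + k).choose k : ℚ) * (n.choose k : ℚ) *
        (1 + (k : ℚ) * (harmonicSum 1 (m + k) + harmonicSum 1 (m - k) + harmonicSum 1 (n + k)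
          + harmonicSum 1 (n - k) - 4 * harmonicSum 1 k)))
    + (∑ k ∈ Finset.Icc (n + 1) m,
      (-1 : ℚ) ^ (k - n) * ((m + k).choose k : ℚ) * (m.choose k : ℚ) * ((n + k).choose k : ℚ)
        / ((k - 1).choose n : ℚ))
    = (-1 : ℚ) ^ (m + n) := by
  calc _ = (-1 : ℚ) ^ (m + n) * ∑ i ∈ range (m + 1),
        residue (nodalNeg m * nodalNeg n) (range (m + 1)) ((range (n + 1)).erase 0) (↑) i := by
        rw [mul_sum, ← sum_range_add_sum_Ico _ (show n + 1 ≤ m + 1 by omega),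
          Ico_add_one_right_eq_Icc]
        simp only [harmonicSum_one]
        congr 1 <;> refine sum_congr rfl fun k hk => ?_
        · rw [neg_one_pow_mul_residue hmn (by simp at hk; omega), if_pos (by simp at hk; omega)]
        · rw [neg_one_pow_mul_residue hmn (by simp at hk; omega), if_neg (by simp at hk; omega)]
    _ = (-1) ^ (m + n) := by rw [sum_residue_eq_one hmn, mul_one]

theorem stmt_1 (m n : ℕ) (hm : 0 < n) (hmn : n ≤ m) :
    (∑ k ∈ Finset.range (n + 1),
      ((m + k).choose k : ℚ) * (m.choose k : ℚ) * ((n + k).choose k : ℚ) * (n.choose k : ℚ) *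
        (1 + (k : ℚ) * (harmonicSum 1 (m + k) + harmonicSum 1 (m - k) + harmonicSum 1 (n + k)
          + harmonicSum 1 (n - k) - 4 * harmonicSum 1 k)))
    + (∑ k ∈ Finset.Icc (n + 1) m,
      (-1 : ℚ) ^ (k - n) * ((m + k).choose k : ℚ) * (m.choose k : ℚ) * ((n + k).choose k : ℚ)
        / ((k - 1).choose n : ℚ))
    = (-1 : ℚ) ^ (m + n) :=
  stmt_1_general m n hmn
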